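/- arXiv:2401.08402 — 4 statements merged into one kernel-verified Lean document; each statement's English description precedes it below -/
import Mathlib

section
/- Let a ∈ ℝ^m be fixed, δ > 0, ζ ∈ (0, δ/2), and let τ₁,…,τ_m be i.i.d. Uniform[−δ/2, δ/2]. Let Z = {i ∈ [m] : t ↦ Q_δ(a_i + τ_i + t) is discontinuous on [−ζ, ζ]}. Then P(|Z| ≥ 5mζ/δ) ≤ exp(−mζ/δ). -/
open MeasureTheory ProbabilityTheory

/-- The uniform quantizer with resolution `δ`: `Q_δ(a) = δ·(⌊a/δ⌋ + 1/2)`. -/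
noncomputable def uniformQuantizer (δ a : ℝ) : ℝ := δ * ((⌊a / δ⌋ : ℝ) + 1 / 2)

/-- The law of a dither uniformly distributed on `[−δ/2, δ/2]`. -/
noncomputable def uniformDitherLaw (δ : ℝ) : Measure ℝ :=
  (ENNReal.ofReal δ)⁻¹ • volume.restrict (Set.Icc (-(δ / 2)) (δ / 2))

/-!
`Q_δ(x + ·)` jumps on `[-ζ, ζ]` exactly when `((x - ζ)/δ, (x + ζ)/δ]` contains an integer, i.e.
when `fract ((x + ζ)/δ) < 2ζ/δ`. The dither is uniform over one full period `δ` of this condition,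
so the `m` independent events have probability `p = 2ζ/δ` each, and the Chernoff bound at
`t = log 2` gives `P(|Z| ≥ 5mp/2) ≤ 2^(-5mp/2) e^(mp) ≤ e^(-mp/2)`.
-/

open Set

theorem continuousOn_floor_comp_Icc_iff {f : ℝ → ℝ} {a b : ℝ} (hab : a ≤ b)
    (hf : MonotoneOn f (Icc a b)) :
    ContinuousOn (fun t => (⌊f t⌋ : ℝ)) (Icc a b) ↔ ⌊f a⌋ = ⌊f b⌋ := by
  have ha : a ∈ Icc a b := left_mem_Icc.2 hab
  have hb : b ∈ Icc a b := right_mem_Icc.2 hab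
  constructor
  · intro hc
    exact isPreconnected_Icc.constant
      (Int.isClosedEmbedding_coe_real.isEmbedding.continuousOn_iff.2 hc) ha hb
  · intro hab_eq
    refine continuousOn_const (c := (⌊f a⌋ : ℝ)).congr fun t ht => ?_
    have h₁ : ⌊f a⌋ ≤ ⌊f t⌋ := Int.floor_le_floor (hf ha ht ht.1)
    have h₂ : ⌊f t⌋ ≤ ⌊f b⌋ := Int.floor_le_floor (hf ht hb ht.2)
    exact congrArg _ (by omega)

theorem Int.floor_sub_eq_floor_iff {R : Type*} [Ring R] [LinearOrder R] [IsStrictOrderedRing R]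
    [FloorRing R] {u s : R} (hs : 0 ≤ s) : ⌊u - s⌋ = ⌊u⌋ ↔ s ≤ Int.fract u := by
  rw [Int.floor_eq_iff, Int.fract, le_sub_comm,
    and_iff_left ((sub_le_self u hs).trans_lt (Int.lt_floor_add_one u))]

theorem continuousOn_uniformQuantizer_add_iff {δ ζ : ℝ} (hδ : 0 < δ) (hζ : 0 ≤ ζ) (x : ℝ) :
    ContinuousOn (fun t => uniformQuantizer δ (x + t)) (Icc (-ζ) ζ) ↔
      ⌊(x - ζ) / δ⌋ = ⌊(x + ζ) / δ⌋ := by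
  let affine : ℝ ≃ₜ ℝ := (Homeomorph.addRight (1 / 2)).trans (Homeomorph.mulLeft₀ δ hδ.ne')
  have hmono : MonotoneOn (fun t => (x + t) / δ) (Icc (-ζ) ζ) := fun s _ t _ hst => by
    dsimp only; gcongr
  rw [sub_eq_add_neg, ← continuousOn_floor_comp_Icc_iff (by linarith) hmono,
    ← affine.comp_continuousOn_iff (fun t => (⌊(x + t) / δ⌋ : ℝ))]
  rfl

theorem not_continuousOn_uniformQuantizer_add_iff {δ ζ : ℝ} (hδ : 0 < δ) (hζ : 0 ≤ ζ) (x : ℝ) :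
    ¬ ContinuousOn (fun t => uniformQuantizer δ (x + t)) (Icc (-ζ) ζ) ↔
      Int.fract ((x + ζ) / δ) < 2 * ζ / δ := by
  rw [continuousOn_uniformQuantizer_add_iff hδ hζ, not_iff_comm, not_lt,
    ← Int.floor_sub_eq_floor_iff (by positivity)]
  ring_nf

theorem measurableSet_setOf_fract_lt (δ b s : ℝ) :
    MeasurableSet {t : ℝ | Int.fract ((b + t) / δ) < s} :=
  measurableSet_lt (by fun_prop) measurable_const

theorem volume_setOf_fract_lt_inter_Ioc {δ s : ℝ} (hδ : 0 < δ) (hs1 : s ≤ 1) (b c : ℝ) :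
    volume ({t | Int.fract ((b + t) / δ) < s} ∩ Ioc c (c + δ)) = ENNReal.ofReal (s * δ) := by
  have hperiodic : ∀ g : AddSubgroup.zmultiples δ,
      (g +ᵥ ·) ⁻¹' {t | Int.fract ((b + t) / δ) < s} = {t | Int.fract ((b + t) / δ) < s} := by
    rintro ⟨_, n, rfl⟩
    ext t
    simp only [mem_preimage, mem_ofPred_eq, AddSubgroup.vadd_def, vadd_eq_add]
    rw [show (b + (n • δ + t)) / δ = (b + t) / δ + n by field_simp; simp; ring,
      Int.fract_add_intCast]
  -- on this period interval `fract` is the identity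
  have hIco : {t | Int.fract ((b + t) / δ) < s} ∩ Ico (-b) (-b + δ) = Ico (-b) (-b + s * δ) := by
    ext t
    simp only [mem_inter_iff, mem_ofPred_eq, mem_Ico]
    constructor
    · rintro ⟨hfract, hb, hbδ⟩
      rw [Int.fract_eq_self.2 ⟨div_nonneg (by linarith) hδ.le, by rw [div_lt_one hδ]; linarith⟩,
        div_lt_iff₀ hδ] at hfract
      exact ⟨hb, by linarith⟩
    · rintro ⟨hb, hbs⟩
      have hbδ : t < -b + δ := by nlinarith
      rw [Int.fract_eq_self.2 ⟨div_nonneg (by linarith) hδ.le, by rw [div_lt_one hδ]; linarith⟩,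
        div_lt_iff₀ hδ]
      exact ⟨by linarith, hb, hbδ⟩
  rw [(isAddFundamentalDomain_Ioc hδ c volume).measure_set_eq
      (isAddFundamentalDomain_Ioc hδ (-b) volume)
      (measurableSet_setOf_fract_lt δ b s) hperiodic,
    measure_congr ((ae_eq_refl _).inter (Ioc_ae_eq_Icc.trans Ico_ae_eq_Icc.symm)), hIco,
    Real.volume_Ico, add_sub_cancel_left]

theorem isProbabilityMeasure_uniformDitherLaw {δ : ℝ} (hδ : 0 < δ) :
    IsProbabilityMeasure (uniformDitherLaw δ) := by
  constructor
  rw [uniformDitherLaw, Measure.smul_apply, Measure.restrict_apply_univ, Real.volume_Icc,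
    sub_neg_eq_add, add_halves, smul_eq_mul,
    ENNReal.inv_mul_cancel (ENNReal.ofReal_pos.2 hδ).ne' ENNReal.ofReal_ne_top]

theorem uniformDitherLaw_setOf_fract_lt {δ s : ℝ} (hδ : 0 < δ) (hs0 : 0 ≤ s) (hs1 : s ≤ 1) (b : ℝ) :
    uniformDitherLaw δ {t | Int.fract ((b + t) / δ) < s} = ENNReal.ofReal s := by
  have hperiod := volume_setOf_fract_lt_inter_Ioc hδ hs1 b (-(δ / 2))
  rw [neg_add_eq_sub, sub_half] at hperiod
  rw [uniformDitherLaw, Measure.smul_apply, Measure.restrict_apply (measurableSet_setOf_fract_lt δ b s),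
    ← measure_congr ((ae_eq_refl _).inter Ioc_ae_eq_Icc), hperiod, smul_eq_mul,
    ENNReal.ofReal_mul hs0, mul_left_comm,
    ENNReal.inv_mul_cancel (ENNReal.ofReal_pos.2 hδ).ne' ENNReal.ofReal_ne_top, mul_one]

section Chernoff

variable {Ω : Type*} [MeasurableSpace Ω] {P : Measure Ω} [IsProbabilityMeasure P]

theorem mgf_indicator_one {E : Set Ω} (hE : NullMeasurableSet E P) (t : ℝ) :
    mgf (E.indicator 1) P t = 1 + (Real.exp t - 1) * P.real E := by
  have hexp : (fun ω => Real.exp (t * E.indicator 1 ω)) =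
      fun ω => 1 + E.indicator (fun _ => Real.exp t - 1) ω := by
    ext ω
    by_cases hω : ω ∈ E <;> simp [hω]
  rw [mgf, hexp, integral_add (integrable_const 1) ((integrable_const _).indicator₀ hE),
    integral_indicator₀ hE, setIntegral_const, integral_const]
  simp [mul_comm]

theorem measureReal_ncard_ge_le_exp {ι : Type*} [Fintype ι] {E : ι → Set Ω}
    (hE : ∀ i, NullMeasurableSet (E i) P)
    (hindep : iIndepFun (fun i => (E i).indicator (1 : Ω → ℝ)) P)
    {p : ℝ} (hp : ∀ i, P.real (E i) ≤ p) {t : ℝ} (ht : 0 ≤ t) (ε : ℝ) :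
    P.real {ω | ε ≤ ({i | ω ∈ E i}.ncard : ℝ)} ≤
      Real.exp (-t * ε + Fintype.card ι * ((Real.exp t - 1) * p)) := by
  classical
  set X : Ω → ℝ := ∑ i, (E i).indicator 1 with hX
  have hX_apply : ∀ ω, X ω = {i | ω ∈ E i}.ncard := by
    intro ω
    simp [X, Finset.sum_apply, indicator_apply, Finset.sum_boole, ncard_eq_toFinset_card']
  have hmeas : ∀ i, AEMeasurable ((E i).indicator (1 : Ω → ℝ)) P := fun i =>
    aemeasurable_const.indicator₀ (hE i)
  have hX_le : ∀ ω, X ω ≤ Fintype.card ι := fun ω => by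
    rw [hX_apply, ← Nat.card_eq_fintype_card]; exact_mod_cast ncard_le_card _
  have hint : Integrable (fun ω => Real.exp (t * X ω)) P := by
    refine Integrable.of_bound (C := Real.exp (t * Fintype.card ι)) ?_ (ae_of_all _ fun ω => ?_)
    · exact (by fun_prop : AEMeasurable X P).const_mul t |>.exp |>.aestronglyMeasurable
    · rw [Real.norm_of_nonneg (Real.exp_nonneg _)]
      gcongr
      exact hX_le ω
  have hmgf : mgf X P t ≤ Real.exp (Fintype.card ι * ((Real.exp t - 1) * p)) := by
    have hexp_sub_one : 0 ≤ Real.exp t - 1 := by linarith [Real.one_le_exp ht]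
    rw [hX, hindep.mgf_sum₀ hmeas]
    calc ∏ i, mgf ((E i).indicator 1) P t = ∏ i, (1 + (Real.exp t - 1) * P.real (E i)) :=
          Finset.prod_congr rfl fun i _ => mgf_indicator_one (hE i) t
      _ ≤ ∏ _i : ι, Real.exp ((Real.exp t - 1) * p) := by
          refine Finset.prod_le_prod (fun i _ => by positivity) fun i _ => ?_
          calc 1 + (Real.exp t - 1) * P.real (E i) ≤ 1 + (Real.exp t - 1) * p := by
                gcongr; exact hp i
            _ ≤ _ := by linarith [Real.add_one_le_exp ((Real.exp t - 1) * p)]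
      _ = _ := by rw [Finset.prod_const, Finset.card_univ, ← Real.exp_nat_mul]
  simp only [← hX_apply]
  calc P.real {ω | ε ≤ X ω} ≤ Real.exp (-t * ε) * mgf X P t :=
        measure_ge_le_exp_mul_mgf ε ht hint
    _ ≤ _ := by rw [Real.exp_add]; gcongr

end Chernoff

/-- Let `a ∈ ℝ^m` be fixed, `δ > 0`, `ζ ∈ (0, δ/2)`, and let `τ₁,…,τ_m` be i.i.d.
`Uniform[−δ/2, δ/2]`. Let `Z = {i ∈ [m] : t ↦ Q_δ(a_i + τ_i + t) is discontinuous on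
[−ζ, ζ]}`. Then `P(|Z| ≥ 5mζ/δ) ≤ exp(−mζ/δ)`. -/
theorem stmt4 {Ω : Type*} [MeasurableSpace Ω] (P : Measure Ω) [IsProbabilityMeasure P]
    (m : ℕ) (a : Fin m → ℝ) (δ ζ : ℝ) (hδ : 0 < δ) (hζ : 0 < ζ) (hζδ : ζ < δ / 2)
    (τ : Fin m → Ω → ℝ)
    (hindep : iIndepFun τ P)
    (hlaw : ∀ i, Measure.map (τ i) P = uniformDitherLaw δ) :
    P {ω | 5 * m * ζ / δ ≤
        (Set.ncard {i : Fin m |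
          ¬ ContinuousOn (fun t => uniformQuantizer δ (a i + τ i ω + t)) (Set.Icc (-ζ) ζ)} : ℝ)} ≤
      ENNReal.ofReal (Real.exp (-(m * ζ / δ))) := by
  set s := 2 * ζ / δ
  have hs0 : 0 ≤ s := by positivity
  have hs1 : s ≤ 1 := by rw [div_le_one hδ]; linarith
  let B : Fin m → Set ℝ := fun i => {t | Int.fract ((a i + ζ + t) / δ) < s}
  have hB : ∀ i, MeasurableSet (B i) := fun i => measurableSet_setOf_fract_lt δ (a i + ζ) s
  have hτ : ∀ i, AEMeasurable (τ i) P := fun i =>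
    have := isProbabilityMeasure_uniformDitherLaw hδ
    aemeasurable_of_map_neZero (hlaw i ▸ inferInstance)
  have hdisc : ∀ ω, {i | ¬ ContinuousOn (fun t => uniformQuantizer δ (a i + τ i ω + t))
      (Icc (-ζ) ζ)} = {i | ω ∈ τ i ⁻¹' B i} := fun ω => by
    ext i
    rw [mem_ofPred_eq, not_continuousOn_uniformQuantizer_add_iff hδ hζ.le, add_right_comm]
    rfl
  have hprob : ∀ i, P.real (τ i ⁻¹' B i) = s := fun i => by
    rw [measureReal_def, ← Measure.map_apply_of_aemeasurable (hτ i) (hB i), hlaw i,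
      uniformDitherLaw_setOf_fract_lt hδ hs0 hs1, ENNReal.toReal_ofReal hs0]
  have hchernoff := measureReal_ncard_ge_le_exp (fun i => (hτ i).nullMeasurableSet_preimage (hB i))
    (hindep.comp (fun i => (B i).indicator 1) fun i => measurable_const.indicator (hB i))
    (fun i => (hprob i).le) (Real.log_nonneg one_le_two) (5 * m * ζ / δ)
  simp only [← hdisc] at hchernoff
  rw [← ENNReal.ofReal_toReal (measure_ne_top P _)]
  refine ENNReal.ofReal_le_ofReal (hchernoff.trans (Real.exp_le_exp.2 ?_))
  have hq : 0 ≤ m * ζ / δ := by positivity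
  have hexponent : -Real.log 2 * (5 * m * ζ / δ) + m * ((2 - 1) * s) =
      -(m * ζ / δ) - (5 * Real.log 2 - 3) * (m * ζ / δ) := by ring
  rw [Real.exp_log two_pos, Fintype.card_fin, hexponent]
  nlinarith [Real.log_two_gt_d9]
end

section
/- Let A ⊂ ℝ^n and B ⊂ ℝ^m be cones, and set C = A × B ⊂ ℝ^{n+m}. With A* = A ∩ S^{n−1}, B* = B ∩ S^{m−1}, C* = C ∩ S^{n+m−1}, the Gaussian complexities satisfy max{γ(A*), γ(B*)} ≤ γ(C*) ≤ γ(A*) + γ(B*). -/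
/-!
For `(a, b) ∈ C*` we have `|a|, |b| ≤ 1`, and since `A` is a cone,
`|⟨g₁, a⟩| = |a| |⟨g₁, a / |a|⟩| ≤ sup_{A*} |⟨g₁, ·⟩|` (trivially if `a = 0`); together with the
same bound for `b` this gives `sup_{C*} ≤ sup_{A*} + sup_{B*}` pointwise in `g = (g₁, g₂)`.
Conversely, `0` lies in the nonempty cone `B`, so `A* × {0} ⊆ C*` and
`sup_{A*} |⟨g₁, ·⟩| ≤ sup_{C*} |⟨g, ·⟩|`. Integrating against the product Gaussian, whose
marginals are the Gaussians on `ℝⁿ` and `ℝᵐ`, gives both inequalities. The suprema are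
integrable: they are lower semicontinuous, as suprema of continuous functions, and bounded by
`∑ |gᵢ|`.
-/

open MeasureTheory ProbabilityTheory

/-- The standard Gaussian measure on `ℝ^n` (i.i.d. `N(0,1)` coordinates). -/
noncomputable def stdGaussianPi (n : ℕ) : Measure (Fin n → ℝ) :=
  Measure.pi fun _ => gaussianReal 0 1

/-- Gaussian complexity `γ(T) = E sup_{x ∈ T} |⟨g, x⟩|` for `g ~ N(0, I_n)`. -/
noncomputable def gaussComplexity {n : ℕ} (T : Set (Fin n → ℝ)) : ℝ :=
  ∫ g, sSup ((fun x => |∑ i, g i * x i|) '' T) ∂(stdGaussianPi n)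

/-- Gaussian complexity for subsets of `ℝ^n × ℝ^m`, with a standard Gaussian vector on the
product space and the Euclidean inner product `⟨(g₁,g₂),(a,b)⟩ = ⟨g₁,a⟩ + ⟨g₂,b⟩`. -/
noncomputable def gaussComplexityProd {n m : ℕ} (T : Set ((Fin n → ℝ) × (Fin m → ℝ))) : ℝ :=
  ∫ g, sSup ((fun p => |(∑ i, g.1 i * p.1 i) + ∑ j, g.2 j * p.2 j|) '' T)
    ∂((stdGaussianPi n).prod (stdGaussianPi m))

open Matrix

instance isProbabilityMeasure_stdGaussianPi (n : ℕ) : IsProbabilityMeasure (stdGaussianPi n) := by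
  unfold stdGaussianPi; infer_instance

lemma integrable_sum_abs_stdGaussianPi (n : ℕ) :
    Integrable (fun g : Fin n → ℝ => ∑ i, |g i|) (stdGaussianPi n) :=
  integrable_finsetSum _ fun i _ =>
    (measurePreserving_eval (fun _ => gaussianReal 0 1) i).integrable_comp_of_integrable
      (g := fun x : ℝ => |x|) ((memLp_id_gaussianReal 1).integrable le_rfl).abs

section SSupImage

variable {E X : Type*} [TopologicalSpace E] {k : E → X → ℝ} {T : Set X}

lemma lowerSemicontinuous_sSup_image (hk : ∀ x ∈ T, Continuous fun g => k g x)
    (hbdd : ∀ g, BddAbove (k g '' T)) : LowerSemicontinuous fun g => sSup (k g '' T) := by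
  simp only [sSup_image']
  refine lowerSemicontinuous_ciSup (fun g => ?_) fun x => (hk x x.2).lowerSemicontinuous
  simpa only [← Set.image_eq_range] using hbdd g

lemma integrable_sSup_image [MeasurableSpace E] [OpensMeasurableSpace E] {μ : Measure E}
    {M : E → ℝ} (hM : Integrable M μ) (hk : ∀ x ∈ T, Continuous fun g => k g x)
    (hk0 : ∀ g, ∀ x ∈ T, 0 ≤ k g x) (hkM : ∀ g, ∀ x ∈ T, k g x ≤ M g) :
    Integrable (fun g => sSup (k g '' T)) μ := by
  rcases T.eq_empty_or_nonempty with rfl | ⟨x₀, hx₀⟩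
  · simp
  have hbdd : ∀ g, BddAbove (k g '' T) := fun g =>
    ⟨M g, Set.forall_mem_image.2 (hkM g)⟩
  refine hM.mono' (lowerSemicontinuous_sSup_image hk hbdd).measurable.aestronglyMeasurable
    (ae_of_all _ fun g => ?_)
  have hsup0 : 0 ≤ sSup (k g '' T) := Real.sSup_nonneg (Set.forall_mem_image.2 (hk0 g))
  rw [Real.norm_eq_abs, abs_of_nonneg hsup0]
  exact csSup_le (Set.image_nonempty.2 ⟨x₀, hx₀⟩) (Set.forall_mem_image.2 (hkM g))

end SSupImage

abbrev sphereSlice {n : ℕ} (A : Set (Fin n → ℝ)) : Set (Fin n → ℝ) :=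
  {x ∈ A | ∑ i, x i ^ 2 = 1}

abbrev sphereSliceProd {n m : ℕ} (A : Set (Fin n → ℝ)) (B : Set (Fin m → ℝ)) :
    Set ((Fin n → ℝ) × (Fin m → ℝ)) :=
  {p ∈ A ×ˢ B | (∑ i, p.1 i ^ 2) + ∑ j, p.2 j ^ 2 = 1}

noncomputable def supAbsDot {n : ℕ} (T : Set (Fin n → ℝ)) (g : Fin n → ℝ) : ℝ :=
  sSup ((fun x => |g ⬝ᵥ x|) '' T)

noncomputable def supAbsDotProd {n m : ℕ} (T : Set ((Fin n → ℝ) × (Fin m → ℝ)))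
    (g : (Fin n → ℝ) × (Fin m → ℝ)) : ℝ :=
  sSup ((fun p => |g.1 ⬝ᵥ p.1 + g.2 ⬝ᵥ p.2|) '' T)

section

variable {n m : ℕ}

lemma supAbsDot_nonneg (T : Set (Fin n → ℝ)) (g : Fin n → ℝ) : 0 ≤ supAbsDot T g :=
  Real.sSup_nonneg (Set.forall_mem_image.2 fun _ _ => abs_nonneg _)

lemma supAbsDotProd_nonneg (T : Set ((Fin n → ℝ) × (Fin m → ℝ)))
    (g : (Fin n → ℝ) × (Fin m → ℝ)) : 0 ≤ supAbsDotProd T g :=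
  Real.sSup_nonneg (Set.forall_mem_image.2 fun _ _ => abs_nonneg _)

lemma abs_dotProduct_le_sum_abs {g x : Fin n → ℝ} (hx : ∑ i, x i ^ 2 ≤ 1) :
    |g ⬝ᵥ x| ≤ ∑ i, |g i| := by
  refine (Finset.abs_sum_le_sum_abs _ _).trans (Finset.sum_le_sum fun i _ => ?_)
  have hxi : x i ^ 2 ≤ 1 :=
    (Finset.single_le_sum (fun j _ => sq_nonneg (x j)) (Finset.mem_univ i)).trans hx
  rw [abs_mul]
  exact mul_le_of_le_one_right (abs_nonneg _) (abs_le_one_iff_mul_self_le_one.2 (by nlinarith))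

lemma sum_sq_le_one_of_mem_sphereSliceProd {A : Set (Fin n → ℝ)} {B : Set (Fin m → ℝ)}
    {p : (Fin n → ℝ) × (Fin m → ℝ)} (hp : p ∈ sphereSliceProd A B) :
    ∑ i, p.1 i ^ 2 ≤ 1 ∧ ∑ j, p.2 j ^ 2 ≤ 1 := by
  have h₁ : 0 ≤ ∑ i, p.1 i ^ 2 := by positivity
  have h₂ : 0 ≤ ∑ j, p.2 j ^ 2 := by positivity
  constructor <;> linarith [hp.2]

lemma abs_dotProduct_add_le_of_mem_sphereSliceProd {A : Set (Fin n → ℝ)} {B : Set (Fin m → ℝ)}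
    {p : (Fin n → ℝ) × (Fin m → ℝ)} (hp : p ∈ sphereSliceProd A B)
    (g : (Fin n → ℝ) × (Fin m → ℝ)) :
    |g.1 ⬝ᵥ p.1 + g.2 ⬝ᵥ p.2| ≤ ∑ i, |g.1 i| + ∑ j, |g.2 j| :=
  (abs_add_le _ _).trans <| add_le_add
    (abs_dotProduct_le_sum_abs (sum_sq_le_one_of_mem_sphereSliceProd hp).1)
    (abs_dotProduct_le_sum_abs (sum_sq_le_one_of_mem_sphereSliceProd hp).2)

lemma le_supAbsDot_of_mem_sphereSlice {A : Set (Fin n → ℝ)} {x : Fin n → ℝ}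
    (hx : x ∈ sphereSlice A) (g : Fin n → ℝ) : |g ⬝ᵥ x| ≤ supAbsDot (sphereSlice A) g :=
  le_csSup ⟨_, Set.forall_mem_image.2 fun _ hy => abs_dotProduct_le_sum_abs hy.2.le⟩ ⟨x, hx, rfl⟩

lemma le_supAbsDotProd_of_mem_sphereSliceProd {A : Set (Fin n → ℝ)} {B : Set (Fin m → ℝ)}
    {p : (Fin n → ℝ) × (Fin m → ℝ)} (hp : p ∈ sphereSliceProd A B)
    (g : (Fin n → ℝ) × (Fin m → ℝ)) :
    |g.1 ⬝ᵥ p.1 + g.2 ⬝ᵥ p.2| ≤ supAbsDotProd (sphereSliceProd A B) g :=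
  le_csSup
    ⟨_, Set.forall_mem_image.2 fun _ hq => abs_dotProduct_add_le_of_mem_sphereSliceProd hq g⟩
    ⟨p, hp, rfl⟩

lemma integrable_supAbsDot_sphereSlice (A : Set (Fin n → ℝ)) :
    Integrable (supAbsDot (sphereSlice A)) (stdGaussianPi n) :=
  integrable_sSup_image (integrable_sum_abs_stdGaussianPi n)
    (fun _ _ => by fun_prop) (fun _ _ _ => abs_nonneg _)
    fun _ _ hx => abs_dotProduct_le_sum_abs hx.2.le

lemma integrable_supAbsDotProd_sphereSliceProd (A : Set (Fin n → ℝ)) (B : Set (Fin m → ℝ)) :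
    Integrable (supAbsDotProd (sphereSliceProd A B))
      ((stdGaussianPi n).prod (stdGaussianPi m)) :=
  integrable_sSup_image
    (((integrable_sum_abs_stdGaussianPi n).comp_fst _).add
      ((integrable_sum_abs_stdGaussianPi m).comp_snd _))
    (fun _ _ => by fun_prop) (fun _ _ _ => abs_nonneg _)
    fun g _ hp => abs_dotProduct_add_le_of_mem_sphereSliceProd hp g

lemma abs_dotProduct_le_supAbsDot_of_smul_mem {A : Set (Fin n → ℝ)}
    (hA : ∀ c : ℝ, 0 ≤ c → ∀ x ∈ A, c • x ∈ A) {a : Fin n → ℝ} (ha : a ∈ A)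
    (ha₁ : ∑ i, a i ^ 2 ≤ 1) (g : Fin n → ℝ) :
    |g ⬝ᵥ a| ≤ supAbsDot (sphereSlice A) g := by
  have hsum : 0 ≤ ∑ i, a i ^ 2 := by positivity
  set s := √(∑ i, a i ^ 2)
  obtain hs | hs : 0 = s ∨ 0 < s := (Real.sqrt_nonneg _).eq_or_lt
  · have ha0 : a = 0 := funext fun i => pow_eq_zero_iff two_ne_zero |>.1 <|
      (Finset.sum_eq_zero_iff_of_nonneg fun j _ => sq_nonneg (a j)).1
        ((Real.sqrt_eq_zero hsum).1 hs.symm) i (Finset.mem_univ i)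
    simp [ha0, supAbsDot_nonneg]
  have hsq : s ^ 2 = ∑ i, a i ^ 2 := Real.sq_sqrt hsum
  have hmem : s⁻¹ • a ∈ sphereSlice A := by
    refine ⟨hA _ (inv_nonneg.2 hs.le) a ha, ?_⟩
    simp only [Pi.smul_apply, smul_eq_mul, mul_pow, ← Finset.mul_sum, ← hsq]
    field_simp
  calc |g ⬝ᵥ a| = s * |g ⬝ᵥ (s⁻¹ • a)| := by
        rw [dotProduct_smul, smul_eq_mul, abs_mul, abs_of_pos (inv_pos.2 hs)]
        field_simp
    _ ≤ 1 * |g ⬝ᵥ (s⁻¹ • a)| := by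
        gcongr
        exact Real.sqrt_le_one.2 ha₁
    _ ≤ supAbsDot (sphereSlice A) g := by
        rw [one_mul]
        exact le_supAbsDot_of_mem_sphereSlice hmem g

lemma supAbsDotProd_le_add {A : Set (Fin n → ℝ)} {B : Set (Fin m → ℝ)}
    (hA : ∀ c : ℝ, 0 ≤ c → ∀ x ∈ A, c • x ∈ A) (hB : ∀ c : ℝ, 0 ≤ c → ∀ x ∈ B, c • x ∈ B)
    (g : (Fin n → ℝ) × (Fin m → ℝ)) :
    supAbsDotProd (sphereSliceProd A B) g ≤
      supAbsDot (sphereSlice A) g.1 + supAbsDot (sphereSlice B) g.2 :=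
  Real.sSup_le (Set.forall_mem_image.2 fun _ hp => (abs_add_le _ _).trans <| add_le_add
      (abs_dotProduct_le_supAbsDot_of_smul_mem hA hp.1.1
        (sum_sq_le_one_of_mem_sphereSliceProd hp).1 g.1)
      (abs_dotProduct_le_supAbsDot_of_smul_mem hB hp.1.2
        (sum_sq_le_one_of_mem_sphereSliceProd hp).2 g.2))
    (add_nonneg (supAbsDot_nonneg _ _) (supAbsDot_nonneg _ _))

lemma supAbsDot_le_supAbsDotProd_fst {A : Set (Fin n → ℝ)} {B : Set (Fin m → ℝ)} (hB : 0 ∈ B)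
    (g : (Fin n → ℝ) × (Fin m → ℝ)) :
    supAbsDot (sphereSlice A) g.1 ≤ supAbsDotProd (sphereSliceProd A B) g := by
  refine Real.sSup_le (Set.forall_mem_image.2 fun x hx => ?_) (supAbsDotProd_nonneg _ g)
  have hmem : (x, 0) ∈ sphereSliceProd A B := ⟨⟨hx.1, hB⟩, by simpa using hx.2⟩
  simpa using le_supAbsDotProd_of_mem_sphereSliceProd hmem g

lemma supAbsDot_le_supAbsDotProd_snd {A : Set (Fin n → ℝ)} {B : Set (Fin m → ℝ)} (hA : 0 ∈ A)
    (g : (Fin n → ℝ) × (Fin m → ℝ)) :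
    supAbsDot (sphereSlice B) g.2 ≤ supAbsDotProd (sphereSliceProd A B) g := by
  refine Real.sSup_le (Set.forall_mem_image.2 fun x hx => ?_) (supAbsDotProd_nonneg _ g)
  have hmem : (0, x) ∈ sphereSliceProd A B := ⟨⟨hA, hx.1⟩, by simpa using hx.2⟩
  simpa using le_supAbsDotProd_of_mem_sphereSliceProd hmem g

lemma gaussComplexity_eq_integral_fst (T : Set (Fin n → ℝ)) (m : ℕ) :
    gaussComplexity T = ∫ g, supAbsDot T g.1 ∂((stdGaussianPi n).prod (stdGaussianPi m)) := by
  rw [integral_fun_fst, probReal_univ, one_smul]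
  rfl

lemma gaussComplexity_eq_integral_snd (n : ℕ) (T : Set (Fin m → ℝ)) :
    gaussComplexity T = ∫ g, supAbsDot T g.2 ∂((stdGaussianPi n).prod (stdGaussianPi m)) := by
  rw [integral_fun_snd, probReal_univ, one_smul]
  rfl

lemma gaussComplexityProd_eq_integral (T : Set ((Fin n → ℝ) × (Fin m → ℝ))) :
    gaussComplexityProd T = ∫ g, supAbsDotProd T g ∂((stdGaussianPi n).prod (stdGaussianPi m)) :=
  rfl

end

/-- Let `A ⊂ ℝ^n` and `B ⊂ ℝ^m` be cones, and set `C = A × B ⊂ ℝ^{n+m}`. With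
`A* = A ∩ S^{n−1}`, `B* = B ∩ S^{m−1}`, `C* = C ∩ S^{n+m−1}`, the Gaussian complexities
satisfy `max{γ(A*), γ(B*)} ≤ γ(C*) ≤ γ(A*) + γ(B*)`. -/
theorem stmt6 {n m : ℕ} (A : Set (Fin n → ℝ)) (B : Set (Fin m → ℝ))
    (hA : ∀ c : ℝ, 0 ≤ c → ∀ x ∈ A, c • x ∈ A) (hAne : A.Nonempty)
    (hB : ∀ c : ℝ, 0 ≤ c → ∀ x ∈ B, c • x ∈ B) (hBne : B.Nonempty) :
    max (gaussComplexity {x ∈ A | ∑ i, x i ^ 2 = 1})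
        (gaussComplexity {x ∈ B | ∑ j, x j ^ 2 = 1}) ≤
      gaussComplexityProd {p ∈ A ×ˢ B | (∑ i, p.1 i ^ 2) + ∑ j, p.2 j ^ 2 = 1} ∧
    gaussComplexityProd {p ∈ A ×ˢ B | (∑ i, p.1 i ^ 2) + ∑ j, p.2 j ^ 2 = 1} ≤
      gaussComplexity {x ∈ A | ∑ i, x i ^ 2 = 1} +
        gaussComplexity {x ∈ B | ∑ j, x j ^ 2 = 1} := by
  have h0A : (0 : Fin n → ℝ) ∈ A := by simpa using hA 0 le_rfl _ hAne.some_mem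
  have h0B : (0 : Fin m → ℝ) ∈ B := by simpa using hB 0 le_rfl _ hBne.some_mem
  have hIA := (integrable_supAbsDot_sphereSlice A).comp_fst (stdGaussianPi m)
  have hIB := (integrable_supAbsDot_sphereSlice B).comp_snd (stdGaussianPi n)
  have hIC := integrable_supAbsDotProd_sphereSliceProd A B
  rw [gaussComplexity_eq_integral_fst (sphereSlice A) m,
    gaussComplexity_eq_integral_snd n (sphereSlice B), gaussComplexityProd_eq_integral]
  refine ⟨max_le ?_ ?_, ?_⟩
  · exact integral_mono hIA hIC (supAbsDot_le_supAbsDotProd_fst h0B)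
  · exact integral_mono hIB hIC (supAbsDot_le_supAbsDotProd_snd h0A)
  · rw [← integral_add hIA hIB]
    exact integral_mono hIC (hIA.add hIB) (supAbsDotProd_le_add hA hB)
end

section
/- Let f be a norm on ℝ^n and g a norm on ℝ^m, with f(x) ≥ ‖x‖₂ for all x and g(v) ≥ ‖v‖₂ for all v, and let λ₁, λ₂, α_x, α_v, C > 0. Define the cone 𝒞 = {(a,b) ∈ ℝ^n × ℝ^m : λ₁ f(a) + λ₂ g(b) ≤ C λ₁ α_x ‖a‖₂ + C λ₂ α_v ‖b‖₂} and 𝒞* = 𝒞 ∩ S^{n+m−1}. Then the Gaussian width satisfies ω(𝒞*) ≤ C′·[(α_x + (λ₂/λ₁)α_v)·ω(B_f) + (α_v + (λ₁/λ₂)α_x)·ω(B_g)] for some constant C′ depending only on C. -/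
/-!
On `𝒞*` both `‖a‖₂` and `‖b‖₂` are at most `1`, so the cone inequality forces
`f a ≤ C (α_x + (λ₂/λ₁) α_v)` and `g b ≤ C (α_v + (λ₁/λ₂) α_x)`: the set `𝒞*` lies in the product
of these multiples of `B_f` and `B_g`. The supremum of `⟨(h₁, h₂), ·⟩` over such a product
splits into the two support functions of the balls, which gives the bound with `C' = C`.
The support functions are Lipschitz because `f` and `g` dominate the Euclidean norm, hence
integrable against the Gaussian measure.
-/

open MeasureTheory ProbabilityTheory

/-- Gaussian width `ω(T) = E sup_{x ∈ T} ⟨g, x⟩` for `g ~ N(0, I_n)`. -/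
noncomputable def gaussWidth {n : ℕ} (T : Set (Fin n → ℝ)) : ℝ :=
  ∫ g, sSup ((fun x => ∑ i, g i * x i) '' T) ∂(stdGaussianPi n)

/-- Gaussian width for subsets of `ℝ^n × ℝ^m`, with a standard Gaussian vector on the
product space and the Euclidean inner product `⟨(g₁,g₂),(a,b)⟩ = ⟨g₁,a⟩ + ⟨g₂,b⟩`. -/
noncomputable def gaussWidthProd {n m : ℕ} (T : Set ((Fin n → ℝ) × (Fin m → ℝ))) : ℝ :=
  ∫ g, sSup ((fun p => (∑ i, g.1 i * p.1 i) + ∑ j, g.2 j * p.2 j) '' T)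
    ∂((stdGaussianPi n).prod (stdGaussianPi m))

open scoped Pointwise

instance (n : ℕ) : IsProbabilityMeasure (stdGaussianPi n) := by
  unfold stdGaussianPi; infer_instance

lemma integrable_id_stdGaussianPi (n : ℕ) : Integrable id (stdGaussianPi n) :=
  Integrable.of_eval fun i =>
    (measurePreserving_eval (fun _ => gaussianReal 0 1) i).integrable_comp_of_integrable
      (memLp_one_iff_integrable.1 (memLp_id_gaussianReal 1))

lemma norm_le_sqrt_sum_sq {ι : Type*} [Fintype ι] (x : ι → ℝ) : ‖x‖ ≤ √(∑ i, x i ^ 2) :=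
  (pi_norm_le_iff_of_nonneg (Real.sqrt_nonneg _)).2 fun i =>
    Real.abs_le_sqrt (Finset.single_le_sum (fun j _ => sq_nonneg (x j)) (Finset.mem_univ i))

lemma sSup_image_nonneg_of_neg_mem {α : Type*} [InvolutiveNeg α] {T : Set α} {L : α → ℝ}
    (hL : ∀ p, L (-p) = -L p) (hT : ∀ p ∈ T, -p ∈ T) (hbdd : BddAbove (L '' T)) :
    0 ≤ sSup (L '' T) := by
  rcases T.eq_empty_or_nonempty with rfl | ⟨p, hp⟩
  · simp
  · have h₁ := le_csSup hbdd (Set.mem_image_of_mem L hp)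
    have h₂ := le_csSup hbdd (Set.mem_image_of_mem L (hT p hp))
    rw [hL] at h₂
    linarith

section SupportFunction

variable {n : ℕ}

noncomputable def supportFun (A : Set (Fin n → ℝ)) (h : Fin n → ℝ) : ℝ :=
  sSup ((h ⬝ᵥ ·) '' A)

lemma gaussWidth_eq_integral_supportFun (A : Set (Fin n → ℝ)) :
    gaussWidth A = ∫ h, supportFun A h ∂stdGaussianPi n :=
  rfl

lemma dotProduct_le_card_mul_norm (h : Fin n → ℝ) {x : Fin n → ℝ} (hx : ‖x‖ ≤ 1) :
    h ⬝ᵥ x ≤ n * ‖h‖ :=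
  calc h ⬝ᵥ x ≤ ∑ _i : Fin n, ‖h‖ := Finset.sum_le_sum fun i _ =>
        calc h i * x i ≤ ‖h i‖ * ‖x i‖ := (le_abs_self _).trans (abs_mul _ _).le
          _ ≤ ‖h‖ * 1 := mul_le_mul (norm_le_pi_norm h i) ((norm_le_pi_norm x i).trans hx)
              (norm_nonneg _) (norm_nonneg _)
          _ = ‖h‖ := mul_one _
    _ = n * ‖h‖ := by simp

variable {A : Set (Fin n → ℝ)}

lemma bddAbove_image_dotProduct (hA : ∀ x ∈ A, ‖x‖ ≤ 1) (h : Fin n → ℝ) :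
    BddAbove ((h ⬝ᵥ ·) '' A) :=
  ⟨n * ‖h‖, Set.forall_mem_image.2 fun _ hx => dotProduct_le_card_mul_norm h (hA _ hx)⟩

lemma dotProduct_le_supportFun (hA : ∀ x ∈ A, ‖x‖ ≤ 1) {x : Fin n → ℝ} (hx : x ∈ A)
    (h : Fin n → ℝ) : h ⬝ᵥ x ≤ supportFun A h :=
  le_csSup (bddAbove_image_dotProduct hA h) (Set.mem_image_of_mem _ hx)

lemma supportFun_nonneg (hA : ∀ x ∈ A, ‖x‖ ≤ 1) (hneg : ∀ x ∈ A, -x ∈ A) (h : Fin n → ℝ) :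
    0 ≤ supportFun A h :=
  sSup_image_nonneg_of_neg_mem (dotProduct_neg h) hneg (bddAbove_image_dotProduct hA h)

lemma supportFun_zero : supportFun A 0 = 0 := by
  simp only [supportFun, zero_dotProduct]
  exact le_antisymm (Real.sSup_nonpos (Set.forall_mem_image.2 fun _ _ => le_rfl))
    (Real.sSup_nonneg (Set.forall_mem_image.2 fun _ _ => le_rfl))

lemma lipschitzWith_supportFun (hA : ∀ x ∈ A, ‖x‖ ≤ 1) : LipschitzWith n (supportFun A) := by
  refine LipschitzWith.of_le_add_mul n fun h h' => ?_
  rcases A.eq_empty_or_nonempty with rfl | hne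
  · simpa [supportFun] using by positivity
  refine csSup_le (hne.image _) (Set.forall_mem_image.2 fun x hx => ?_)
  calc h ⬝ᵥ x = h' ⬝ᵥ x + (h - h') ⬝ᵥ x := by rw [sub_dotProduct]; ring
    _ ≤ supportFun A h' + n * dist h h' := by
      rw [dist_eq_norm]
      exact add_le_add (dotProduct_le_supportFun hA hx h')
        (dotProduct_le_card_mul_norm _ (hA x hx))

lemma integrable_supportFun (hA : ∀ x ∈ A, ‖x‖ ≤ 1) :
    Integrable (supportFun A) (stdGaussianPi n) :=
  memLp_one_iff_integrable.1 ((lipschitzWith_supportFun hA).comp_memLp supportFun_zero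
    (memLp_one_iff_integrable.2 (integrable_id_stdGaussianPi n)))

end SupportFunction

theorem gaussWidthProd_le_of_subset_smul_prod {n m : ℕ} {T : Set ((Fin n → ℝ) × (Fin m → ℝ))}
    {A : Set (Fin n → ℝ)} {B : Set (Fin m → ℝ)} {a b : ℝ} (ha : 0 ≤ a) (hb : 0 ≤ b)
    (hA : ∀ x ∈ A, ‖x‖ ≤ 1) (hB : ∀ y ∈ B, ‖y‖ ≤ 1) (hAneg : ∀ x ∈ A, -x ∈ A)
    (hBneg : ∀ y ∈ B, -y ∈ B) (hTneg : ∀ p ∈ T, -p ∈ T) (hTAB : T ⊆ (a • A) ×ˢ (b • B)) :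
    gaussWidthProd T ≤ a * gaussWidth A + b * gaussWidth B := by
  have hbound : ∀ (h : (Fin n → ℝ) × (Fin m → ℝ)), ∀ p ∈ T,
      h.1 ⬝ᵥ p.1 + h.2 ⬝ᵥ p.2 ≤ a * supportFun A h.1 + b * supportFun B h.2 := by
    intro h p hp
    obtain ⟨⟨x, hx, hpx⟩, ⟨y, hy, hpy⟩⟩ := hTAB hp
    rw [← hpx, ← hpy, dotProduct_smul, dotProduct_smul, smul_eq_mul, smul_eq_mul]
    exact add_le_add (mul_le_mul_of_nonneg_left (dotProduct_le_supportFun hA hx _) ha)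
      (mul_le_mul_of_nonneg_left (dotProduct_le_supportFun hB hy _) hb)
  have hintA : Integrable (fun h : (Fin n → ℝ) × (Fin m → ℝ) => a * supportFun A h.1)
      ((stdGaussianPi n).prod (stdGaussianPi m)) :=
    ((integrable_supportFun hA).comp_fst _).const_mul a
  have hintB : Integrable (fun h : (Fin n → ℝ) × (Fin m → ℝ) => b * supportFun B h.2)
      ((stdGaussianPi n).prod (stdGaussianPi m)) :=
    ((integrable_supportFun hB).comp_snd _).const_mul b
  calc gaussWidthProd T
      ≤ ∫ h, a * supportFun A h.1 + b * supportFun B h.2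
          ∂(stdGaussianPi n).prod (stdGaussianPi m) := by
        -- the symmetry of `T` makes the integrand nonnegative, so it need not be integrable
        refine integral_mono_of_nonneg (ae_of_all _ fun h => ?_) (hintA.add hintB)
          (ae_of_all _ fun h => ?_)
        · refine sSup_image_nonneg_of_neg_mem (fun p => ?_) hTneg
            ⟨_, Set.forall_mem_image.2 (hbound h)⟩
          simp only [Prod.fst_neg, Prod.snd_neg]
          change h.1 ⬝ᵥ -p.1 + h.2 ⬝ᵥ -p.2 = -(h.1 ⬝ᵥ p.1 + h.2 ⬝ᵥ p.2)
          rw [dotProduct_neg, dotProduct_neg, neg_add]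
        · exact Real.sSup_le (Set.forall_mem_image.2 (hbound h))
            (add_nonneg (mul_nonneg ha (supportFun_nonneg hA hAneg _))
              (mul_nonneg hb (supportFun_nonneg hB hBneg _)))
    _ = a * gaussWidth A + b * gaussWidth B := by
        rw [integral_add hintA hintB, integral_const_mul, integral_const_mul, integral_fun_fst,
          integral_fun_snd]
        simp [gaussWidth_eq_integral_supportFun]

lemma map_neg_eq_of_abs_homogeneous {E : Type*} [AddCommGroup E] [Module ℝ E] {f : E → ℝ}
    (hhom : ∀ (c : ℝ) x, f (c • x) = |c| * f x) (x : E) : f (-x) = f x := by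
  simpa using hhom (-1) x

lemma mem_smul_setOf_le_one {E : Type*} [AddCommGroup E] [Module ℝ E] {f : E → ℝ}
    (hhom : ∀ (c : ℝ) x, f (c • x) = |c| * f x) {K : ℝ} (hK : 0 < K) {x : E} (hx : f x ≤ K) :
    x ∈ K • {x | f x ≤ 1} := by
  rw [Set.mem_smul_set_iff_inv_smul_mem₀ hK.ne', Set.mem_ofPred_eq, hhom,
    abs_of_pos (inv_pos.2 hK), inv_mul_le_iff₀ hK, mul_one]
  exact hx

lemma le_of_mul_add_mul_le {c l₁ l₂ α β u v s t : ℝ} (hc : 0 ≤ c) (hl₁ : 0 < l₁)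
    (hl₂ : 0 ≤ l₂) (hα : 0 ≤ α) (hβ : 0 ≤ β) (hs : s ≤ 1) (ht : t ≤ 1) (hv : 0 ≤ v)
    (h : l₁ * u + l₂ * v ≤ c * l₁ * α * s + c * l₂ * β * t) :
    u ≤ c * (α + l₂ / l₁ * β) := by
  rw [show c * (α + l₂ / l₁ * β) = (c * l₁ * α + c * l₂ * β) / l₁ by field_simp,
    le_div_iff₀ hl₁]
  nlinarith [mul_le_mul_of_nonneg_left hs (by positivity : 0 ≤ c * l₁ * α),
    mul_le_mul_of_nonneg_left ht (by positivity : 0 ≤ c * l₂ * β), mul_nonneg hl₂ hv]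

/-- Let `f` be a norm on `ℝ^n` and `g` a norm on `ℝ^m`, with `f(x) ≥ ‖x‖₂` for all `x` and
`g(v) ≥ ‖v‖₂` for all `v`, and let `λ₁, λ₂, α_x, α_v, C > 0`. Define the cone
`𝒞 = {(a,b) : λ₁ f(a) + λ₂ g(b) ≤ C λ₁ α_x ‖a‖₂ + C λ₂ α_v ‖b‖₂}` and
`𝒞* = 𝒞 ∩ S^{n+m−1}`. Then
`ω(𝒞*) ≤ C′·[(α_x + (λ₂/λ₁)α_v)·ω(B_f) + (α_v + (λ₁/λ₂)α_x)·ω(B_g)]`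
for some constant `C′` depending only on `C`. -/
theorem stmt17 (C : ℝ) (hC : 0 < C) :
    ∃ C' : ℝ, 0 < C' ∧
      ∀ (n m : ℕ) (f : (Fin n → ℝ) → ℝ) (g : (Fin m → ℝ) → ℝ) (lam₁ lam₂ αx αv : ℝ),
        0 < lam₁ → 0 < lam₂ → 0 < αx → 0 < αv →
        (∀ x y, f (x + y) ≤ f x + f y) → (∀ (c : ℝ) x, f (c • x) = |c| * f x) →
        (∀ x, f x = 0 → x = 0) →
        (∀ x, Real.sqrt (∑ i, x i ^ 2) ≤ f x) →
        (∀ u w, g (u + w) ≤ g u + g w) → (∀ (c : ℝ) u, g (c • u) = |c| * g u) →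
        (∀ u, g u = 0 → u = 0) →
        (∀ u, Real.sqrt (∑ j, u j ^ 2) ≤ g u) →
        gaussWidthProd {p : (Fin n → ℝ) × (Fin m → ℝ) |
            (lam₁ * f p.1 + lam₂ * g p.2 ≤
              C * lam₁ * αx * Real.sqrt (∑ i, p.1 i ^ 2) +
                C * lam₂ * αv * Real.sqrt (∑ j, p.2 j ^ 2)) ∧
            (∑ i, p.1 i ^ 2) + (∑ j, p.2 j ^ 2) = 1} ≤
          C' * ((αx + (lam₂ / lam₁) * αv) * gaussWidth {x | f x ≤ 1} +
            (αv + (lam₁ / lam₂) * αx) * gaussWidth {u | g u ≤ 1}) := by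
  refine ⟨C, hC, fun n m f g lam₁ lam₂ αx αv hl₁ hl₂ hαx hαv _ hf _ hfge _ hg _ hgge => ?_⟩
  have hKx : 0 < C * (αx + lam₂ / lam₁ * αv) := by positivity
  have hKv : 0 < C * (αv + lam₁ / lam₂ * αx) := by positivity
  have hsphere {s t : ℝ} (hs : 0 ≤ s) (ht : 0 ≤ t) (hst : s + t = 1) : √s ≤ 1 ∧ √t ≤ 1 :=
    ⟨Real.sqrt_le_one.2 (by linarith), Real.sqrt_le_one.2 (by linarith)⟩
  refine (gaussWidthProd_le_of_subset_smul_prod (A := {x | f x ≤ 1}) (B := {u | g u ≤ 1})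
    hKx.le hKv.le
    (fun x hx => (norm_le_sqrt_sum_sq x).trans ((hfge x).trans hx))
    (fun u hu => (norm_le_sqrt_sum_sq u).trans ((hgge u).trans hu))
    (fun x hx => (map_neg_eq_of_abs_homogeneous hf x).trans_le hx)
    (fun u hu => (map_neg_eq_of_abs_homogeneous hg u).trans_le hu) ?_ ?_).trans_eq (by ring)
  · rintro p ⟨hcone, hnorm⟩
    simpa [map_neg_eq_of_abs_homogeneous hf, map_neg_eq_of_abs_homogeneous hg] using
      And.intro hcone hnorm
  · rintro p ⟨hcone, hnorm⟩
    obtain ⟨ha, hb⟩ := hsphere (by positivity) (by positivity) hnorm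
    exact ⟨mem_smul_setOf_le_one hf hKx (le_of_mul_add_mul_le hC.le hl₁ hl₂.le hαx.le hαv.le
        ha hb ((Real.sqrt_nonneg _).trans (hgge _)) hcone),
      mem_smul_setOf_le_one hg hKv (le_of_mul_add_mul_le hC.le hl₂ hl₁.le hαv.le hαx.le
        hb ha ((Real.sqrt_nonneg _).trans (hfge _)) (by linarith))⟩
end

section
/- Let f be a norm on ℝ^n and let X, X̄ be linear subspaces with X ⊂ X̄ such that f is decomposable over (X, X̄^⊥), i.e., f(x₁ + x₂) = f(x₁) + f(x₂) for all x₁ ∈ X and x₂ ∈ X̄^⊥. If x* ∈ X and x̂ = x* + Δ, then f(x̂) − f(x*) ≥ f(P_{X̄^⊥}Δ) − f(P_{X̄}Δ), where P denotes orthogonal projection. -/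
theorem sub_map_le_map_add_of_subadditive {G : Type*} [AddGroup G] (f : G → ℝ)
    (hsub : ∀ x y, f (x + y) ≤ f x + f y) (hneg : ∀ x, f (-x) = f x) (x y : G) :
    f x - f y ≤ f (x + y) := by
  have h := hsub (x + y) (-y)
  rw [add_neg_cancel_right, hneg] at h
  linarith

theorem sub_le_map_add_sub_of_map_add_eq {G : Type*} [AddCommGroup G] (f : G → ℝ)
    (hsub : ∀ x y, f (x + y) ≤ f x + f y) (hneg : ∀ x, f (-x) = f x) {x a b : G}
    (hdec : f (x + b) = f x + f b) :
    f b - f a ≤ f (x + (a + b)) - f x := by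
  have h := sub_map_le_map_add_of_subadditive f hsub hneg (x + b) a
  rw [hdec, add_assoc, add_comm b a] at h
  linarith

theorem stmt19_general {n : ℕ} (f : EuclideanSpace ℝ (Fin n) → ℝ)
    (hsub : ∀ x y, f (x + y) ≤ f x + f y) (hneg : ∀ x, f (-x) = f x)
    (X Xbar : Submodule ℝ (EuclideanSpace ℝ (Fin n)))
    (hdec : ∀ x₁ ∈ X, ∀ x₂ ∈ Xbarᗮ, f (x₁ + x₂) = f x₁ + f x₂)
    (xstar Δ : EuclideanSpace ℝ (Fin n)) (hx : xstar ∈ X) :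
    f ((Submodule.orthogonalProjectionOnto Xbarᗮ Δ : EuclideanSpace ℝ (Fin n))) -
        f ((Submodule.orthogonalProjectionOnto Xbar Δ : EuclideanSpace ℝ (Fin n))) ≤
      f (xstar + Δ) - f xstar := by
  have hΔ : (Xbar.orthogonalProjectionOnto Δ : EuclideanSpace ℝ (Fin n)) +
      Xbarᗮ.orthogonalProjectionOnto Δ = Δ :=
    Xbar.starProjection_add_starProjection_orthogonal Δ
  have h := sub_le_map_add_sub_of_map_add_eq f hsub hneg (a := Xbar.orthogonalProjectionOnto Δ)
    (hdec xstar hx _ (Xbarᗮ.orthogonalProjectionOnto Δ).2)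
  rwa [hΔ] at h

/-- Let `f` be a norm on `ℝ^n` and let `X, X̄` be linear subspaces with `X ⊂ X̄` such that
`f` is decomposable over `(X, X̄^⊥)`, i.e., `f(x₁ + x₂) = f(x₁) + f(x₂)` for all `x₁ ∈ X`
and `x₂ ∈ X̄^⊥`. If `x* ∈ X` and `x̂ = x* + Δ`, then
`f(x̂) − f(x*) ≥ f(P_{X̄^⊥}Δ) − f(P_{X̄}Δ)`, where `P` denotes orthogonal projection. -/
theorem stmt19 {n : ℕ} (f : EuclideanSpace ℝ (Fin n) → ℝ)
    (hsub : ∀ x y, f (x + y) ≤ f x + f y) (hneg : ∀ x, f (-x) = f x)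
    (X Xbar : Submodule ℝ (EuclideanSpace ℝ (Fin n))) (hXX : X ≤ Xbar)
    (hdec : ∀ x₁ ∈ X, ∀ x₂ ∈ Xbarᗮ, f (x₁ + x₂) = f x₁ + f x₂)
    (xstar Δ : EuclideanSpace ℝ (Fin n)) (hx : xstar ∈ X) :
    f ((Submodule.orthogonalProjectionOnto Xbarᗮ Δ : EuclideanSpace ℝ (Fin n))) -
        f ((Submodule.orthogonalProjectionOnto Xbar Δ : EuclideanSpace ℝ (Fin n))) ≤
      f (xstar + Δ) - f xstar :=
  stmt19_general f hsub hneg X Xbar hdec xstar Δ hx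
end
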